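/- Suppose counters are updated by a sequence of operations, each either an addition of a value in {-1,0,+1} or an assignment (:= v for fixed v), where the operation applied at step t depends only on the k-window of input ending at t. If two input strings have equal multisets of k-windows, and additionally every window triggering an assignment to a given counter occurs in a common suffix shared by both strings (after which the counters evolve identically), then the final value of every counter is the same on both strings. -/

import Mathlib

/-- A counter operation: either add a value or assign a fixed value. -/
inductive CtrOp : Type
  | add (d : ℚ) : CtrOp
  | assign (v : ℚ) : CtrOp

/-- Apply a counter operation to the current counter value. -/
def CtrOp.apply (o : CtrOp) (c : ℚ) : ℚ :=
  match o with
  | CtrOp.add d => c + d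
  | CtrOp.assign v => v

/-- The `k`-window of `x` ending at position `t` (0-indexed, inclusive; shorter,
i.e. padded, near the left edge). -/
def window {α : Type} (k : ℕ) (x : List α) (t : ℕ) : List α :=
  (x.take (t + 1)).drop (t + 1 - k)

/-- The multiset of all `k`-windows of `x`. -/
def windows {α : Type} (k : ℕ) (x : List α) : Multiset (List α) :=
  ((List.range x.length).map (window k x) : List (List α))

/-- Run the counter (starting at 0) on `x`, applying at each step `t` the operation
determined by the `k`-window of `x` ending at `t`. -/
def runCtr {α : Type} (k : ℕ) (op : List α → CtrOp) (x : List α) : ℚ :=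
  (List.range x.length).foldl (fun c t => (op (window k x t)).apply c) 0

/-!
Split the run after position `T`. If some window triggers an assignment, one such window occurs
at a position `≥ T`, so an assignment happens inside the common suffix; it erases whatever value
the prefix produced, and from then on both runs perform identical operations. Otherwise no
assignment happens on either string (the window multisets agree), and each final value is just
the sum of the additive updates over the multiset of windows.
-/

namespace CtrOp

def addend : CtrOp → ℚ
  | add d => d
  | assign _ => 0

def run (l : List CtrOp) (c : ℚ) : ℚ :=
  l.foldl (fun c o => o.apply c) c

theorem run_eq_add_sum_addend {l : List CtrOp} (hl : ∀ o ∈ l, ∀ v, o ≠ assign v) (c : ℚ) :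
    run l c = c + (l.map addend).sum := by
  induction l generalizing c with
  | nil => simp [run]
  | cons o l ih =>
    obtain ⟨d, rfl⟩ : ∃ d, o = add d := by
      cases o with
      | add d => exact ⟨d, rfl⟩
      | assign v => exact absurd rfl (hl _ List.mem_cons_self v)
    rw [run, List.foldl_cons, ← run, ih (fun o ho => hl o (List.mem_cons_of_mem _ ho))]
    simp only [apply, addend, List.map_cons, List.sum_cons]
    ring

theorem run_eq_run_of_assign_mem {l : List CtrOp} {v : ℚ} (hv : assign v ∈ l) (c c' : ℚ) :
    run l c = run l c' := by
  induction l generalizing c c' with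
  | nil => simp at hv
  | cons o l ih =>
    simp only [run, List.foldl_cons]
    rcases List.mem_cons.mp hv with rfl | hv
    · rfl
    · exact ih hv _ _

theorem run_append_eq_of_assign_mem {p q s : List CtrOp} {v : ℚ} (hv : assign v ∈ s)
    (c c' : ℚ) : run (p ++ s) c = run (q ++ s) c' := by
  simp only [run, List.foldl_append]
  exact run_eq_run_of_assign_mem hv _ _

end CtrOp

section Windows

variable {α : Type} (k : ℕ)

def windowList (x : List α) : List (List α) :=
  (List.range x.length).map (window k x)

theorem windows_eq_coe_windowList (x : List α) : windows k x = (windowList k x : Multiset _) :=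
  rfl

theorem runCtr_eq_run (op : List α → CtrOp) (x : List α) :
    runCtr k op x = CtrOp.run ((windowList k x).map op) 0 := by
  simp only [runCtr, CtrOp.run, windowList, List.foldl_map]

theorem windowList_drop (x : List α) (T : ℕ) :
    (windowList k x).drop T = (List.range' T (x.length - T)).map (window k x) := by
  rw [windowList, ← List.map_drop, List.range_eq_range', List.drop_range']
  simp

theorem windowList_drop_eq_of_window_eq {x y : List α} (hlen : x.length = y.length) {T : ℕ}
    (hsuf : ∀ t, T ≤ t → t < x.length → window k x t = window k y t) :
    (windowList k x).drop T = (windowList k y).drop T := by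
  rw [windowList_drop, windowList_drop, ← hlen]
  refine List.map_congr_left fun t ht => ?_
  have ht := List.mem_range'_1.mp ht
  exact hsuf t ht.1 (by omega)

theorem mem_windows_iff {x : List α} {w : List α} :
    w ∈ windows k x ↔ ∃ t < x.length, window k x t = w := by
  simp [windows_eq_coe_windowList, windowList]

theorem runCtr_eq_sum_addend {op : List α → CtrOp} {x : List α}
    (hx : ∀ w ∈ windows k x, ∀ v, op w ≠ CtrOp.assign v) :
    runCtr k op x = ((windows k x).map fun w => (op w).addend).sum := by
  rw [runCtr_eq_run, CtrOp.run_eq_add_sum_addend, windows_eq_coe_windowList]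
  · simp [Function.comp_def]
  · simp only [List.mem_map]
    rintro _ ⟨w, hw, rfl⟩
    exact hx w hw

theorem runCtr_eq_of_assign_in_common_suffix {op : List α → CtrOp} {x y : List α} {T : ℕ}
    (hdrop : (windowList k x).drop T = (windowList k y).drop T)
    {t : ℕ} (hTt : T ≤ t) (ht : t < x.length) {v : ℚ} (hv : op (window k x t) = .assign v) :
    runCtr k op x = runCtr k op y := by
  have hmem : CtrOp.assign v ∈ ((windowList k x).drop T).map op := by
    rw [windowList_drop, List.map_map]
    exact List.mem_map.mpr ⟨t, List.mem_range'_1.mpr ⟨hTt, by omega⟩, hv⟩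
  rw [runCtr_eq_run, runCtr_eq_run, ← List.take_append_drop T ((windowList k x).map op),
    ← List.take_append_drop T ((windowList k y).map op), ← List.map_drop, ← List.map_drop,
    ← hdrop]
  exact CtrOp.run_append_eq_of_assign_mem hmem _ _

end Windows

theorem stmt_15_general {α : Type} (k : ℕ) (op : List α → CtrOp)
    (x y : List α) (hlen : x.length = y.length)
    (hmult : windows k x = windows k y)
    (T : ℕ)
    (hsuf : ∀ t : ℕ, T ≤ t → t < x.length → window k x t = window k y t)
    (hax : ∀ t : ℕ, t < x.length → (∃ v, op (window k x t) = CtrOp.assign v) →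
      ∃ t' : ℕ, T ≤ t' ∧ t' < x.length ∧ window k x t' = window k x t) :
    runCtr k op x = runCtr k op y := by
  by_cases hA : ∃ t < x.length, ∃ v, op (window k x t) = CtrOp.assign v
  · obtain ⟨t, ht, v, hv⟩ := hA
    obtain ⟨t', hTt', ht', hwt'⟩ := hax t ht ⟨v, hv⟩
    exact runCtr_eq_of_assign_in_common_suffix k (windowList_drop_eq_of_window_eq k hlen hsuf)
      hTt' ht' (hwt' ▸ hv)
  · have hx : ∀ w ∈ windows k x, ∀ v, op w ≠ CtrOp.assign v := by
      rintro w hw v hv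
      obtain ⟨t, ht, rfl⟩ := (mem_windows_iff k).mp hw
      exact hA ⟨t, ht, v, hv⟩
    rw [runCtr_eq_sum_addend k hx, runCtr_eq_sum_addend k (hmult ▸ hx), hmult]

/-- The key lemma of the suffix attack: if the operation at step `t` depends only on
the `k`-window ending at `t`, all additive updates lie in `{-1, 0, +1}`, the two
strings have the same length and equal multisets of `k`-windows, the windows at all
positions of a common final region agree between the two strings, and every window
triggering an assignment also occurs (in each string) in that common region, then
the final counter values on the two strings coincide. -/
theorem stmt_15 {α : Type} (k : ℕ) (op : List α → CtrOp)
    (hadd : ∀ (w : List α) (d : ℚ), op w = CtrOp.add d → d ∈ ({-1, 0, 1} : Set ℚ))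
    (x y : List α) (hlen : x.length = y.length)
    (hmult : windows k x = windows k y)
    (T : ℕ)
    (hsuf : ∀ t : ℕ, T ≤ t → t < x.length → window k x t = window k y t)
    (hax : ∀ t : ℕ, t < x.length → (∃ v, op (window k x t) = CtrOp.assign v) →
      ∃ t' : ℕ, T ≤ t' ∧ t' < x.length ∧ window k x t' = window k x t)
    (hay : ∀ t : ℕ, t < y.length → (∃ v, op (window k y t) = CtrOp.assign v) →
      ∃ t' : ℕ, T ≤ t' ∧ t' < y.length ∧ window k y t' = window k y t) :
    runCtr k op x = runCtr k op y :=
  stmt_15_general k op x y hlen hmult T hsuf hax
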